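/- Let H be a hypergraph with a partition (Red, X, Blue) of V(H) such that no hyperedge of H contains both a red and a blue vertex. Let F be a reduced elimination forest of H. If U ⊆ Red ∪ Blue is the set of descendants of some vertex u in F, then U is monochromatic, i.e., U ⊆ Red or U ⊆ Blue. The same conclusion holds if U = F_v ∪ {u} ⊆ Red ∪ Blue where v is a child of u and F_v denotes the descendants of v. -/

import Mathlib

/-- A hypergraph on vertex type `V`: a set of nonempty hyperedges. -/
structure Hypergraph' (V : Type*) where
  E : Set (Set V)
  edge_nonempty : ∀ e ∈ E, e.Nonempty

/-- Two vertices are adjacent if they are distinct and share a hyperedge. -/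
def Hypergraph'.adj {V : Type*} (H : Hypergraph' V) (u v : V) : Prop :=
  u ≠ v ∧ ∃ e ∈ H.E, u ∈ e ∧ v ∈ e

/-- A rooted forest on `V`, given by parent pointers, with no infinite ancestor chains. -/
structure RootedForest (V : Type*) where
  parent : V → Option V
  wf : WellFounded fun a b => parent b = some a

/-- `F.anc a b` : `a` is an ancestor of `b` (every vertex is an ancestor of itself). -/
def RootedForest.anc {V : Type*} (F : RootedForest V) (a b : V) : Prop :=
  Relation.ReflTransGen (fun x y => F.parent x = some y) b a

/-- The set of descendants of `x` (including `x` itself). -/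
def RootedForest.desc {V : Type*} (F : RootedForest V) (x : V) : Set V :=
  {v | F.anc x v}

/-- `F` is an elimination forest of `H`: any two adjacent vertices are in
ancestor–descendant relation. -/
def IsEliminationForest {V : Type*} (H : Hypergraph' V) (F : RootedForest V) : Prop :=
  ∀ u v, H.adj u v → F.anc u v ∨ F.anc v u

/-- `F` is reduced: every non-leaf vertex `u` is adjacent in `H` to the subtree
rooted at each of its children. -/
def IsReducedForest {V : Type*} (H : Hypergraph' V) (F : RootedForest V) : Prop :=
  ∀ u v, F.parent v = some u → ∃ w ∈ F.desc v, H.adj u w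

/-- The subhypergraph of `H` induced by `S` is connected. -/
def HConnectedOn {V : Type*} (H : Hypergraph' V) (S : Set V) : Prop :=
  ∀ a ∈ S, ∀ b ∈ S,
    Relation.ReflTransGen (fun x y => x ∈ S ∧ y ∈ S ∧ H.adj x y) a b

/-
Induct on the subtree below `u`, from the leaves up (the forest is finite). If `u` is red and
a child `v` were the root of a blue subtree, reducedness would give a hyperedge joining `u` to
a blue vertex below `v`. For `{u} ∪ F_v`, the colour of `u` is forced in the same way by the
already monochromatic subtree `F_v`.
-/

namespace RootedForest

variable {V : Type*} (F : RootedForest V)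

lemma mem_desc_self (u : V) : u ∈ F.desc u := Relation.ReflTransGen.refl

variable {F}

lemma desc_subset_of_parent {u v : V} (h : F.parent v = some u) : F.desc v ⊆ F.desc u :=
  fun _ hx => Relation.ReflTransGen.tail hx h

lemma notMem_desc_of_parent {u v : V} (h : F.parent v = some u) : u ∉ F.desc v := fun hu =>
  F.wf.transGen.irrefl.irrefl u <| Relation.TransGen.swap _ _ <| Relation.TransGen.tail' hu h

lemma eq_or_mem_desc_child {u x : V} (h : x ∈ F.desc u) :
    x = u ∨ ∃ v, F.parent v = some u ∧ x ∈ F.desc v := by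
  rcases Relation.ReflTransGen.cases_tail h with h | ⟨v, hxv, hv⟩
  · exact Or.inl h.symm
  · exact Or.inr ⟨v, hv, hxv⟩

lemma ncard_desc_lt_of_parent [Finite V] {u v : V} (h : F.parent v = some u) :
    (F.desc v).ncard < (F.desc u).ncard :=
  Set.ncard_lt_ncard ⟨desc_subset_of_parent h,
    fun hsub => notMem_desc_of_parent h (hsub (F.mem_desc_self u))⟩

variable (F)

lemma wellFounded_child [Finite V] : WellFounded fun v u => F.parent v = some u :=
  Subrelation.wf (fun h => ncard_desc_lt_of_parent h) (measure fun u => (F.desc u).ncard).wf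

end RootedForest

open RootedForest

section Separation

variable {V : Type*} {H : Hypergraph' V} {F : RootedForest V} {A B : Set V}

lemma Hypergraph'.adj.symm {a b : V} (h : H.adj a b) : H.adj b a :=
  let ⟨hne, e, he, hae, hbe⟩ := h
  ⟨hne.symm, e, he, hbe, hae⟩

lemma not_adj_of_mem_of_mem (hsep : ∀ e ∈ H.E, ¬((e ∩ A).Nonempty ∧ (e ∩ B).Nonempty))
    {a b : V} (ha : a ∈ A) (hb : b ∈ B) : ¬H.adj a b := fun ⟨_, e, he, hae, hbe⟩ =>
  hsep e he ⟨⟨a, hae, ha⟩, ⟨b, hbe, hb⟩⟩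

lemma mem_of_adj_of_mem_union (hsep : ∀ e ∈ H.E, ¬((e ∩ A).Nonempty ∧ (e ∩ B).Nonempty))
    {a b : V} (hab : H.adj a b) (ha : a ∈ A) (hb : b ∈ A ∪ B) : b ∈ A :=
  hb.resolve_right fun hbB => not_adj_of_mem_of_mem hsep ha hbB hab

lemma desc_subset_of_mem_of_desc_subset_union [Finite V] (hred : IsReducedForest H F) (u : V) :
    ∀ {A B : Set V}, (∀ e ∈ H.E, ¬((e ∩ A).Nonempty ∧ (e ∩ B).Nonempty)) →
      u ∈ A → F.desc u ⊆ A ∪ B → F.desc u ⊆ A := by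
  induction u using F.wellFounded_child.induction with
  | _ u ih =>
  intro A B hsep hu hsub x hx
  rcases eq_or_mem_desc_child hx with rfl | ⟨v, hv, hxv⟩
  · exact hu
  have hsubv : F.desc v ⊆ A ∪ B := (desc_subset_of_parent hv).trans hsub
  rcases hsubv (F.mem_desc_self v) with hvA | hvB
  · exact ih v hv hsep hvA hsubv hxv
  obtain ⟨w, hw, huw⟩ := hred u v hv
  have hdescB : F.desc v ⊆ B :=
    ih v hv (fun e he h => hsep e he h.symm) hvB fun y hy => (hsubv hy).symm
  exact absurd huw (not_adj_of_mem_of_mem hsep hu (hdescB hw))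

lemma desc_subset_or_of_desc_subset_union [Finite V] (hred : IsReducedForest H F)
    (hsep : ∀ e ∈ H.E, ¬((e ∩ A).Nonempty ∧ (e ∩ B).Nonempty)) {u : V}
    (hsub : F.desc u ⊆ A ∪ B) : F.desc u ⊆ A ∨ F.desc u ⊆ B := by
  rcases hsub (F.mem_desc_self u) with hu | hu
  · exact Or.inl (desc_subset_of_mem_of_desc_subset_union hred u hsep hu hsub)
  · exact Or.inr (desc_subset_of_mem_of_desc_subset_union hred u
      (fun e he h => hsep e he h.symm) hu fun y hy => (hsub hy).symm)

lemma insert_desc_subset_of_desc_subset (hred : IsReducedForest H F)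
    (hsep : ∀ e ∈ H.E, ¬((e ∩ A).Nonempty ∧ (e ∩ B).Nonempty)) {u v : V}
    (hv : F.parent v = some u) (hvA : F.desc v ⊆ A) (hu : u ∈ A ∪ B) :
    insert u (F.desc v) ⊆ A := by
  obtain ⟨w, hw, huw⟩ := hred u v hv
  exact Set.insert_subset (mem_of_adj_of_mem_union hsep huw.symm (hvA hw) hu) hvA

end Separation

theorem stmt_3_general {V : Type*} [Fintype V] (H : Hypergraph' V) (F : RootedForest V)
    (hred : IsReducedForest H F)
    (Red Blue : Set V)
    (hsep : ∀ e ∈ H.E, ¬((e ∩ Red).Nonempty ∧ (e ∩ Blue).Nonempty)) :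
    (∀ u : V, F.desc u ⊆ Red ∪ Blue → F.desc u ⊆ Red ∨ F.desc u ⊆ Blue) ∧
    (∀ u v : V, F.parent v = some u → insert u (F.desc v) ⊆ Red ∪ Blue →
      insert u (F.desc v) ⊆ Red ∨ insert u (F.desc v) ⊆ Blue) := by
  have hsep' : ∀ e ∈ H.E, ¬((e ∩ Blue).Nonempty ∧ (e ∩ Red).Nonempty) :=
    fun e he h => hsep e he h.symm
  refine ⟨fun u => desc_subset_or_of_desc_subset_union hred hsep, fun u v hv hsub => ?_⟩
  have hu : u ∈ Red ∪ Blue := hsub (Set.mem_insert u _)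
  rcases desc_subset_or_of_desc_subset_union hred hsep
      ((Set.subset_insert u _).trans hsub) with hvRed | hvBlue
  · exact Or.inl (insert_desc_subset_of_desc_subset hred hsep hv hvRed hu)
  · exact Or.inr (insert_desc_subset_of_desc_subset hred hsep' hv hvBlue hu.symm)

/-- Red–blue monochromaticity of subtrees in a reduced elimination forest:
if `(Red, X, Blue)` partitions `V(H)` and no hyperedge meets both `Red` and `Blue`,
then any set of descendants `F.desc u` contained in `Red ∪ Blue` is monochromatic,
and likewise for `{u} ∪ F.desc v` where `v` is a child of `u`. -/
theorem stmt_3 {V : Type*} [Fintype V] (H : Hypergraph' V) (F : RootedForest V)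
    (hEF : IsEliminationForest H F) (hred : IsReducedForest H F)
    (Red X Blue : Set V) (hcover : Red ∪ X ∪ Blue = Set.univ)
    (hRX : Disjoint Red X) (hRB : Disjoint Red Blue) (hXB : Disjoint X Blue)
    (hsep : ∀ e ∈ H.E, ¬((e ∩ Red).Nonempty ∧ (e ∩ Blue).Nonempty)) :
    (∀ u : V, F.desc u ⊆ Red ∪ Blue → F.desc u ⊆ Red ∨ F.desc u ⊆ Blue) ∧
    (∀ u v : V, F.parent v = some u → insert u (F.desc v) ⊆ Red ∪ Blue →
      insert u (F.desc v) ⊆ Red ∨ insert u (F.desc v) ⊆ Blue) :=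
  stmt_3_general H F hred Red Blue hsep
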